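/- arXiv:1610.06820 — 3 statements merged into one kernel-verified Lean document; each statement's English description precedes it below -/
import Mathlib

section
/- Let m ≥ 1 be an integer, Ω ⊂ ℝ^{2m} a domain, φ ∈ K(Ω,∅), and let Ω̃ be an open set whose closure is compact and contained in Ω \ S_φ. Define V_k := 1 on Ω̃ and V_k := 0 on Ω \ Ω̃ for every k. Then for every Λ > 0 there exists no sequence (u_k)_{k∈ℕ} of functions u_k ∈ C^{2m−1}(Ω) solving (−Δ)^m u_k = V_k e^{2m u_k} in Ω in the distributional sense with ∫_Ω V_k e^{2m u_k} dx = Λ for all k, u_k → −∞ locally uniformly on Ω \ S_φ, and u_k → +∞ locally uniformly on S_φ^*. -/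
noncomputable section

open MeasureTheory Real Filter Topology Metric Set Bornology

/-- Euclidean space `ℝ^{2m}`. -/
abbrev Euc (m : ℕ) : Type := EuclideanSpace ℝ (Fin (2*m))

/-- Pointwise Laplacian `Δ f (x) = ∑ ∂²f/∂xᵢ²`. -/
def lap {m : ℕ} (f : Euc m → ℝ) (x : Euc m) : ℝ :=
  ∑ i : Fin (2*m),
    fderiv ℝ (fun y => fderiv ℝ f y (EuclideanSpace.single i (1:ℝ))) x
      (EuclideanSpace.single i (1:ℝ))

/-- `(−Δ)^j f`, pointwise. -/
def negLapPow {m : ℕ} (j : ℕ) (f : Euc m → ℝ) : Euc m → ℝ :=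
  (fun g x => -(lap g x))^[j] f

/-- Smooth test functions compactly supported inside `Ω`. -/
def IsTestOn {m : ℕ} (Ω : Set (Euc m)) (ψ : Euc m → ℝ) : Prop :=
  ContDiff ℝ (⊤ : ℕ∞) ψ ∧ HasCompactSupport ψ ∧ tsupport ψ ⊆ Ω

/-- `u` solves `(−Δ)^m u = V e^{2mu}` on `Ω` in the distributional sense. -/
def SolvesQ {m : ℕ} (Ω : Set (Euc m)) (V u : Euc m → ℝ) : Prop :=
  ∀ ψ : Euc m → ℝ, IsTestOn Ω ψ →
    ∫ x in Ω, u x * negLapPow m ψ x = ∫ x in Ω, V x * Real.exp ((2*m : ℝ) * u x) * ψ x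

/-- Volume of the standard unit `n`-sphere: `2 π^{(n+1)/2} / Γ((n+1)/2)`. -/
def sphereVol (n : ℕ) : ℝ :=
  2 * Real.pi ^ (((n : ℝ) + 1)/2) / Real.Gamma (((n : ℝ) + 1)/2)

/-- `Λ₁ = (2m−1)! vol(S^{2m})`. -/
def Lambda1 (m : ℕ) : ℝ := (Nat.factorial (2*m - 1) : ℝ) * sphereVol (2*m)

/-- `γ_{2m} = Λ₁/2`. -/
def gamma2m (m : ℕ) : ℝ := Lambda1 m / 2

/-- The class `K(Ω,∅)`: smooth, nonpositive, not identically zero, `Δ^m φ ≡ 0` on `Ω`. -/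
def memK {m : ℕ} (Ω : Set (Euc m)) (φ : Euc m → ℝ) : Prop :=
  ContDiffOn ℝ (⊤ : ℕ∞) φ Ω ∧ (∀ x ∈ Ω, φ x ≤ 0) ∧ (∃ x ∈ Ω, φ x ≠ 0) ∧
    ∀ x ∈ Ω, negLapPow m φ x = 0

/-- `S_φ = {x ∈ Ω : φ(x) = 0}`. -/
def Sphi {m : ℕ} (Ω : Set (Euc m)) (φ : Euc m → ℝ) : Set (Euc m) :=
  {x | x ∈ Ω ∧ φ x = 0}

/-- `S_φ^* = S_φ ∪ {x ∈ ∂Ω : lim_{Ω ∋ y → x} φ(y) = 0}`. -/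
def SphiStar {m : ℕ} (Ω : Set (Euc m)) (φ : Euc m → ℝ) : Set (Euc m) :=
  Sphi Ω φ ∪ {x | x ∈ frontier Ω ∧ Tendsto φ (𝓝[Ω] x) (𝓝 0)}

/-- `u_k → +∞` locally uniformly on `S`. -/
def LocUnifTop {m : ℕ} (u : ℕ → Euc m → ℝ) (S : Set (Euc m)) : Prop :=
  ∀ K : Set (Euc m), K ⊆ S → IsCompact K → ∀ C : ℝ,
    ∀ᶠ k in atTop, ∀ x ∈ K, C ≤ u k x

/-- `u_k → −∞` locally uniformly on `S`. -/
def LocUnifBot {m : ℕ} (u : ℕ → Euc m → ℝ) (S : Set (Euc m)) : Prop :=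
  ∀ K : Set (Euc m), K ⊆ S → IsCompact K → ∀ C : ℝ,
    ∀ᶠ k in atTop, ∀ x ∈ K, u k x ≤ C

/-- **Proposition (nonexistence for a potential concentrated away from `S_φ`).**
Let `Ω ⊆ ℝ^{2m}` be a domain, `φ ∈ K(Ω,∅)`, and `Ω̃` open with compact closure contained
in `Ω \ S_φ`. With `V = 1` on `Ω̃` and `V = 0` elsewhere, for every `Λ > 0` there is no
sequence of solutions `u_k ∈ C^{2m−1}(Ω)` of `(−Δ)^m u_k = V e^{2m u_k}` with
`∫_Ω V e^{2m u_k} dx = Λ`, `u_k → −∞` locally uniformly on `Ω \ S_φ` and `u_k → +∞`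
locally uniformly on `S_φ^*`. -/
theorem statement9 (m : ℕ) (hm : 1 ≤ m) (Ω : Set (Euc m)) (hΩopen : IsOpen Ω)
    (hΩconn : IsConnected Ω)
    (φ : Euc m → ℝ) (hφ : memK Ω φ)
    (Ωt : Set (Euc m)) (hΩtopen : IsOpen Ωt) (hΩtcpt : IsCompact (closure Ωt))
    (hΩtsub : closure Ωt ⊆ Ω \ Sphi Ω φ)
    (V : Euc m → ℝ) (hV : V = Set.indicator Ωt (fun _ => (1 : ℝ)))
    (Λ : ℝ) (hΛpos : 0 < Λ) :
    ¬ ∃ u : ℕ → Euc m → ℝ,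
        (∀ k, ContDiffOn ℝ (2*m - 1 : ℕ) (u k) Ω) ∧
        (∀ k, SolvesQ Ω V (u k)) ∧
        (∀ k, ∫ x in Ω, V x * Real.exp ((2*m : ℝ) * u k x) = Λ) ∧
        LocUnifBot u (Ω \ Sphi Ω φ) ∧
        LocUnifTop u (SphiStar Ω φ) := by
  rintro ⟨u, hreg, hsol, hint, hbot, htop⟩
  have hm0 : (0:ℝ) < 2*m := by positivity
  set K := closure Ωt with hK
  have hKc : IsCompact K := hΩtcpt
  set μK : ℝ := (volume K).toReal with hμK
  have hμK0 : 0 ≤ μK := ENNReal.toReal_nonneg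
  set C : ℝ := Real.log (Λ / (μK + 1)) / (2*m) with hC
  have hpos : 0 < Λ / (μK + 1) := by positivity
  have hexp : Real.exp ((2*m:ℝ) * C) = Λ / (μK + 1) := by
    rw [hC, mul_div_cancel₀ _ hm0.ne', Real.exp_log hpos]
  obtain ⟨k, hk⟩ := (hbot K hΩtsub hKc C).exists
  have hΛ := hint k
  set c : ℝ := Real.exp ((2*m:ℝ) * C) with hc
  have hmeasK : MeasurableSet K := isClosed_closure.measurableSet
  have hle : (∫ x in Ω, V x * Real.exp ((2*m:ℝ) * u k x)) ≤
      ∫ x in Ω, K.indicator (fun _ => c) x := by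
    apply integral_mono_of_nonneg
    · filter_upwards with x
      rw [hV]
      by_cases hx : x ∈ Ωt
      · simp [Set.indicator_of_mem hx]; positivity
      · simp [Set.indicator_of_notMem hx]
    · refine (integrable_indicator_iff hmeasK).2 ?_
      exact integrableOn_const (lt_of_le_of_lt (Measure.restrict_apply_le Ω K) hKc.measure_lt_top).ne
    · filter_upwards with x
      rw [hV]
      by_cases hx : x ∈ Ωt
      · rw [Set.indicator_of_mem hx, Set.indicator_of_mem (subset_closure hx)]
        have := hk x (subset_closure hx)
        simp only [one_mul]
        exact Real.exp_le_exp.2 (by nlinarith)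
      · rw [Set.indicator_of_notMem hx]
        simp only [zero_mul]
        by_cases hx2 : x ∈ K
        · rw [Set.indicator_of_mem hx2]; positivity
        · rw [Set.indicator_of_notMem hx2]
  have hrhs : (∫ x in Ω, K.indicator (fun _ => c) x) ≤ μK * c := by
    rw [integral_indicator_const _ hmeasK, smul_eq_mul]
    have h1 : (volume.restrict Ω) K ≤ volume K := Measure.restrict_le_self K
    have h2 : ((volume.restrict Ω) K).toReal ≤ μK :=
      ENNReal.toReal_mono hKc.measure_lt_top.ne h1
    have hc0 : 0 < c := Real.exp_pos _
    have h3 : (volume.restrict Ω).real K ≤ μK := h2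
    nlinarith
  have hfinal : μK * c < Λ := by
    rw [hexp, div_eq_mul_inv]
    have h1 : μK * (Λ * (μK + 1)⁻¹) = Λ * (μK / (μK + 1)) := by ring
    rw [h1]
    have : μK / (μK + 1) < 1 := by
      rw [div_lt_one (by positivity)]; linarith
    nlinarith
  rw [hΛ] at hle
  linarith
end
end

section
/- Let m ≥ 1 be an integer, q > 0, k ∈ ℕ, and ε₁ ∈ (0, q/(8m)). Let u₀ ∈ C^∞(ℝ^{2m}) with u₀ > 0, u₀(x) = log|x| for |x| ≥ 2, and let M > 0 satisfy e^{u₀} ≤ M on B₂. Let F_k : ℝ^{2m} → ℝ be measurable with ∫_{ℝ^{2m}} |F_k(x)| (M+|x|)^q dx ≤ ε₁ e^{−k} e^{−2m}. For v in the closed unit ball B̄₁ of C₀(ℝ^{2m}) (continuous functions vanishing at infinity, sup norm) and |α| < q/(2m) define I_k(v,α) := γ_{2m}^{−1} ∫_{ℝ^{2m}} F_k e^{−2mα u₀} e^{2mv} dx. Then for every v ∈ B̄₁: if I_k(v,0) > 0 there exists α ∈ (0, ε₁ e^{−k}] with I_k(v,α) = α, and if I_k(v,0) < 0 there exists α ∈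 [−ε₁ e^{−k}, 0) with I_k(v,α) = α. -/
noncomputable section

open MeasureTheory Real Filter Topology Metric Set Bornology

/-- The functional `I_k(v,α) = γ_{2m}⁻¹ ∫ F e^{−2mα u₀} e^{2mv} dx`. -/
def Ifun (m : ℕ) (u₀ F : Euc m → ℝ) (v : Euc m → ℝ) (α : ℝ) : ℝ :=
  (1 / gamma2m m) *
    ∫ x, F x * Real.exp (-(2*m : ℝ) * α * u₀ x) * Real.exp ((2*m : ℝ) * v x)

lemma one_le_gamma2m {m : ℕ} (hm : 1 ≤ m) : 1 ≤ gamma2m m := by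
  have hs : (((2*m : ℕ) : ℝ) + 1)/2 = (1/2 : ℝ) • (m:ℝ) + (1/2 : ℝ) • ((m:ℝ)+1) := by
    simp only [smul_eq_mul]; push_cast; ring
  set s : ℝ := (((2*m : ℕ) : ℝ) + 1)/2 with hsdef
  have hm0 : (0:ℝ) < m := by exact_mod_cast hm
  have hGm : Real.Gamma (m:ℝ) = (Nat.factorial (m-1) : ℝ) := by
    have h1 : ((m-1 : ℕ) : ℝ) + 1 = (m:ℝ) := by
      have h2 : m - 1 + 1 = m := Nat.succ_pred_eq_of_pos hm
      exact_mod_cast congrArg (Nat.cast (R := ℝ)) h2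
    rw [← h1, Real.Gamma_nat_eq_factorial]
  have hGm1 : Real.Gamma ((m:ℝ)+1) = (Nat.factorial m : ℝ) := by
    exact_mod_cast Real.Gamma_nat_eq_factorial m
  have hconv := Real.convexOn_Gamma.2 (show (m:ℝ) ∈ Ioi 0 from hm0)
    (show (m:ℝ)+1 ∈ Ioi 0 from mem_Ioi.mpr (by positivity)) (by norm_num : (0:ℝ) ≤ 1/2)
    (by norm_num : (0:ℝ) ≤ 1/2) (by norm_num)
  rw [← hs] at hconv
  have hGs : Real.Gamma s ≤ (Nat.factorial m : ℝ) := by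
    refine hconv.trans ?_
    rw [hGm, hGm1]
    have : (Nat.factorial (m-1) : ℝ) ≤ (Nat.factorial m : ℝ) := by
      exact_mod_cast Nat.factorial_le (by omega)
    simp only [smul_eq_mul]; linarith
  have hspos : (0:ℝ) < s := by rw [hsdef]; positivity
  have hpi : (1:ℝ) ≤ Real.pi ^ s :=
    Real.one_le_rpow (by linarith [Real.pi_gt_three]) hspos.le
  have hGs0 : 0 < Real.Gamma s := Real.Gamma_pos_of_pos hspos
  have hfact : (Nat.factorial m : ℝ) ≤ (Nat.factorial (2*m-1) : ℝ) := by
    exact_mod_cast Nat.factorial_le (by omega)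
  have hfac0 : (0:ℝ) ≤ (Nat.factorial (2*m-1) : ℝ) := by positivity
  have key : Real.Gamma s ≤ (Nat.factorial (2*m-1) : ℝ) * Real.pi ^ s := by
    calc Real.Gamma s ≤ (Nat.factorial m : ℝ) := hGs
      _ ≤ (Nat.factorial (2*m-1) : ℝ) * 1 := by linarith
      _ ≤ (Nat.factorial (2*m-1) : ℝ) * Real.pi ^ s :=
          mul_le_mul_of_nonneg_left hpi hfac0
  have : gamma2m m = (Nat.factorial (2*m-1) : ℝ) * Real.pi ^ s / Real.Gamma s := by
    rw [gamma2m, Lambda1, sphereVol, ← hsdef]; ring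
  rw [this, le_div_iff₀ hGs0, one_mul]
  exact key

/-- **Lemma (existence of small fixed points of `α ↦ I_k(v,α)`).** Under the smallness
assumption `∫ |F_k| (M+|x|)^q dx ≤ ε₁ e^{−k} e^{−2m}`, for each `v` in the closed unit
ball of `C₀(ℝ^{2m})`: if `I_k(v,0) > 0` there is `α ∈ (0, ε₁e^{−k}]` with `I_k(v,α) = α`,
and if `I_k(v,0) < 0` there is `α ∈ [−ε₁e^{−k}, 0)` with `I_k(v,α) = α`. -/
theorem statement11 (m : ℕ) (hm : 1 ≤ m) (q : ℝ) (hq : 0 < q) (k : ℕ)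
    (ε₁ : ℝ) (hε₁ : ε₁ ∈ Set.Ioo 0 (q / (8*m)))
    (u₀ : Euc m → ℝ) (hu₀smooth : ContDiff ℝ (⊤ : ℕ∞) u₀) (hu₀pos : ∀ x, 0 < u₀ x)
    (hu₀log : ∀ x : Euc m, 2 ≤ ‖x‖ → u₀ x = Real.log ‖x‖)
    (M : ℝ) (hM : 0 < M)
    (hMbd : ∀ x ∈ closedBall (0 : Euc m) 2, Real.exp (u₀ x) ≤ M)
    (F : Euc m → ℝ) (hFmeas : Measurable F)
    (hFint : Integrable (fun x => |F x| * (M + ‖x‖) ^ q))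
    (hFsmall : (∫ x, |F x| * (M + ‖x‖) ^ q)
      ≤ ε₁ * Real.exp (-(k : ℝ)) * Real.exp (-(2*m : ℝ)))
    (v : Euc m → ℝ) (hvcont : Continuous v)
    (hv0 : Tendsto v (cocompact (Euc m)) (𝓝 0)) (hvbd : ∀ x, |v x| ≤ 1) :
    (0 < Ifun m u₀ F v 0 →
      ∃ α ∈ Set.Ioc (0 : ℝ) (ε₁ * Real.exp (-(k : ℝ))), Ifun m u₀ F v α = α) ∧
    (Ifun m u₀ F v 0 < 0 →
      ∃ α ∈ Set.Ico (-(ε₁ * Real.exp (-(k : ℝ)))) (0 : ℝ), Ifun m u₀ F v α = α) := by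
  obtain ⟨hε₁0, hε₁q⟩ := hε₁
  set δ : ℝ := ε₁ * Real.exp (-(k : ℝ)) with hδdef
  have hδpos : 0 < δ := by positivity
  have hδlt : δ < q / (8*m) := by
    have h1 : Real.exp (-(k:ℝ)) ≤ 1 := Real.exp_le_one_iff.mpr (neg_nonpos.mpr (Nat.cast_nonneg k))
    nlinarith [Real.exp_pos (-(k:ℝ))]
  have hm0 : (0:ℝ) < m := by exact_mod_cast hm
  have hγ : 1 ≤ gamma2m m := one_le_gamma2m hm
  have hγ0 : 0 < gamma2m m := lt_of_lt_of_le one_pos hγ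
  -- basic bounds
  have hM1 : 1 < M := by
    have h0 := hMbd 0 (by simp)
    calc (1:ℝ) < Real.exp (u₀ 0) := Real.one_lt_exp_iff.mpr (hu₀pos 0)
      _ ≤ M := h0
  have hbase1 : ∀ x : Euc m, 1 ≤ M + ‖x‖ := fun x => by
    have := norm_nonneg x; linarith
  have hexp : ∀ x : Euc m, Real.exp (u₀ x) ≤ M + ‖x‖ := by
    intro x
    by_cases hx : ‖x‖ ≤ 2
    · have := hMbd x (by simpa [mem_closedBall, dist_eq_norm] using hx)
      have := norm_nonneg x; linarith
    · push_neg at hx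
      rw [hu₀log x hx.le, Real.exp_log (by linarith)]
      linarith
  -- the integrand and the dominating function
  set f : ℝ → Euc m → ℝ := fun α x =>
    F x * Real.exp (-(2*m : ℝ) * α * u₀ x) * Real.exp ((2*m : ℝ) * v x) with hfdef
  set B : Euc m → ℝ := fun x => |F x| * (M + ‖x‖) ^ q * Real.exp ((2*m : ℝ)) with hBdef
  have hmeas : ∀ α, AEStronglyMeasurable (f α) volume := by
    intro α
    apply Measurable.aestronglyMeasurable
    exact (hFmeas.mul ((Real.continuous_exp.comp
      ((continuous_const.mul (hu₀smooth.continuous))) ).measurable)).mul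
      ((Real.continuous_exp.comp (continuous_const.mul hvcont)).measurable)
  have hbound : ∀ α : ℝ, |α| ≤ q / (8*m) → ∀ x, ‖f α x‖ ≤ B x := by
    intro α hα x
    have hqα : (2*(m:ℝ)) * |α| ≤ q := by
      have : (2*(m:ℝ)) * |α| ≤ 2*(m:ℝ) * (q/(8*m)) :=
        mul_le_mul_of_nonneg_left hα (by positivity)
      have heq : 2*(m:ℝ) * (q/(8*m)) = q/4 := by field_simp; ring
      rw [heq] at this; linarith
    have h1 : Real.exp (-(2*m : ℝ) * α * u₀ x) ≤ (M + ‖x‖) ^ q := by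
      calc Real.exp (-(2*m : ℝ) * α * u₀ x)
          ≤ Real.exp (u₀ x * ((2*(m:ℝ)) * |α|)) := by
            apply Real.exp_le_exp.mpr
            have h2 : -(2*(m:ℝ)) * α ≤ (2*(m:ℝ)) * |α| := by
              have := neg_abs_le α
              nlinarith [abs_nonneg α]
            nlinarith [(hu₀pos x).le]
        _ = Real.exp (u₀ x) ^ ((2*(m:ℝ)) * |α|) := Real.exp_mul _ _
        _ ≤ (M + ‖x‖) ^ ((2*(m:ℝ)) * |α|) :=
            Real.rpow_le_rpow (Real.exp_pos _).le (hexp x) (by positivity)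
        _ ≤ (M + ‖x‖) ^ q :=
            Real.rpow_le_rpow_of_exponent_le (hbase1 x) hqα
    have h2 : Real.exp ((2*m : ℝ) * v x) ≤ Real.exp ((2*m : ℝ)) := by
      apply Real.exp_le_exp.mpr
      have := (abs_le.mp (hvbd x)).2
      nlinarith
    have := Real.exp_pos (-(2*m : ℝ) * α * u₀ x)
    have := Real.exp_pos ((2*m : ℝ) * v x)
    have hB1 : (0:ℝ) ≤ (M + ‖x‖) ^ q := by positivity
    calc ‖f α x‖ = |F x| * Real.exp (-(2*m : ℝ) * α * u₀ x) * Real.exp ((2*m : ℝ) * v x) := by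
          rw [hfdef]; simp [abs_mul, abs_of_pos (Real.exp_pos _)]
      _ ≤ |F x| * (M + ‖x‖) ^ q * Real.exp ((2*m : ℝ)) := by
          apply mul_le_mul
          · exact mul_le_mul_of_nonneg_left h1 (abs_nonneg _)
          · exact h2
          · positivity
          · positivity
      _ = B x := rfl
  have hBint : Integrable B := hFint.mul_const _
  have hIeq : ∀ α, Ifun m u₀ F v α = (1 / gamma2m m) * ∫ x, f α x := fun α => rfl
  -- uniform bound on |Ifun|
  have hIbd : ∀ α : ℝ, |α| ≤ q / (8*m) → |Ifun m u₀ F v α| ≤ δ := by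
    intro α hα
    have hint : ‖∫ x, f α x‖ ≤ ∫ x, B x :=
      norm_integral_le_of_norm_le hBint (ae_of_all _ (hbound α hα))
    have hBval : ∫ x, B x ≤ δ := by
      rw [hBdef]
      rw [MeasureTheory.integral_mul_const]
      calc (∫ x, |F x| * (M + ‖x‖) ^ q) * Real.exp ((2*m : ℝ))
          ≤ (ε₁ * Real.exp (-(k : ℝ)) * Real.exp (-(2*m : ℝ))) * Real.exp ((2*m : ℝ)) :=
            mul_le_mul_of_nonneg_right hFsmall (Real.exp_pos _).le
        _ = δ := by rw [mul_assoc, ← Real.exp_add]; simp [hδdef]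
    rw [hIeq]
    rw [abs_mul, abs_of_pos (by positivity : (0:ℝ) < 1 / gamma2m m)]
    calc (1 / gamma2m m) * |∫ x, f α x| ≤ 1 * δ := by
          apply mul_le_mul
          · rw [div_le_one hγ0]; linarith
          · exact le_trans (le_of_eq (Real.norm_eq_abs _).symm) (le_trans hint hBval)
          · positivity
          · norm_num
      _ = δ := one_mul δ
  -- continuity
  have hcont : ∀ α₀ : ℝ, |α₀| ≤ δ → ContinuousAt (fun α => Ifun m u₀ F v α) α₀ := by
    intro α₀ hα₀
    have h1 : ContinuousAt (fun α => ∫ x, f α x) α₀ := by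
      apply MeasureTheory.continuousAt_of_dominated
        (bound := B)
      · exact Eventually.of_forall fun α => hmeas α
      · have hopen : {α : ℝ | |α| < q/(8*m)} ∈ 𝓝 α₀ := by
          apply (isOpen_Iio.preimage continuous_abs).mem_nhds
          exact lt_of_le_of_lt hα₀ hδlt
        filter_upwards [hopen] with α hα
        exact ae_of_all _ (hbound α hα.le)
      · exact hBint
      · apply ae_of_all
        intro x
        apply Continuous.continuousAt
        fun_prop
    simpa only [hIeq] using h1.const_mul (1 / gamma2m m)
  have hconton : ∀ a b : ℝ, -δ ≤ a → b ≤ δ →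
      ContinuousOn (fun α => Ifun m u₀ F v α - α) (Icc a b) := by
    intro a b ha hb
    apply ContinuousOn.sub _ continuousOn_id
    intro α hα
    exact (hcont α (abs_le.mpr ⟨by linarith [hα.1], by linarith [hα.2]⟩)).continuousWithinAt
  constructor
  · intro h0
    have hδq : |δ| ≤ q/(8*m) := by rw [abs_of_pos hδpos]; linarith
    have hIδ : Ifun m u₀ F v δ ≤ δ := le_trans (le_abs_self _) (hIbd δ hδq)
    rcases eq_or_lt_of_le hIδ with heq | hlt
    · exact ⟨δ, ⟨hδpos, le_refl δ⟩, heq⟩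
    · set g : ℝ → ℝ := fun α => Ifun m u₀ F v α - α with hgdef
      have hg : ContinuousOn g (Icc 0 δ) := hconton 0 δ (by linarith) le_rfl
      have h0' : (0:ℝ) ∈ Ioo (g δ) (g 0) := by
        constructor
        · simp only [hgdef]; linarith
        · simp only [hgdef]; simpa using h0
      obtain ⟨α, hαmem, hαeq⟩ := intermediate_value_Ioo' hδpos.le hg h0'
      exact ⟨α, ⟨hαmem.1, hαmem.2.le⟩, by simpa [hgdef, sub_eq_zero] using hαeq⟩
  · intro h0
    have hδq : |(-δ)| ≤ q/(8*m) := by rw [abs_neg, abs_of_pos hδpos]; linarith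
    have hIδ : -δ ≤ Ifun m u₀ F v (-δ) := (abs_le.mp (hIbd (-δ) hδq)).1
    rcases eq_or_lt_of_le hIδ with heq | hlt
    · exact ⟨-δ, ⟨le_refl _, by linarith⟩, heq.symm⟩
    · set g : ℝ → ℝ := fun α => Ifun m u₀ F v α - α with hgdef
      have hg : ContinuousOn g (Icc (-δ) 0) := hconton (-δ) 0 le_rfl (by linarith)
      have h0' : (0:ℝ) ∈ Ioo (g 0) (g (-δ)) := by
        constructor
        · simp only [hgdef]; simpa using h0
        · simp only [hgdef]; linarith
      obtain ⟨α, hαmem, hαeq⟩ := intermediate_value_Ioo' (by linarith : -δ ≤ (0:ℝ)) hg h0'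
      exact ⟨α, ⟨hαmem.1.le, hαmem.2⟩, by simpa [hgdef, sub_eq_zero] using hαeq⟩
end
end

section
/- Let m ≥ 1 be an integer, q > 0, k ∈ ℕ. Let u₀ ∈ C^∞(ℝ^{2m}) with u₀ > 0, u₀(x) = log|x| for |x| ≥ 2, and M > 0 with e^{u₀} ≤ M on B₂. There exist ε₀ > 0 and ε₁ ∈ (0, q/(8m)) (depending only on m and q) such that the following holds: let F_k : ℝ^{2m} → ℝ be measurable with ∫_{ℝ^{2m}} |F_k(x)|(M+|x|)^q dx ≤ ε₁ e^{−k} e^{−2m}, and define I_k(v,α) := γ_{2m}^{−1} ∫ F_k e^{−2mα u₀} e^{2mv} dx for v in the closed unit ball B̄₁ of C₀(ℝ^{2m}) and |α| < q/(2m). Then (i) for every ε ∈ (0, ε₀) and every v ∈ B̄₁, if I_k(v, α_v) = α_v for some |α_v| < q/(4m), then for every w ∈ B̄₁ with ‖w − v‖_∞ ≤ ε² there exists α_w ∈ (α_v − ε, α_v + ε) with I_k(w, α_w) = α_w; and (ii) the map v ↦ α_{k,v} is continuous on B̄₁, where α_{k,v} is defined as the infimum of the positive fixed points of α ↦ I_k(v,α)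 if I_k(v,0) > 0, the supremum of the negative fixed points if I_k(v,0) < 0, and 0 if I_k(v,0) = 0, and α_{k,v} satisfies I_k(v, α_{k,v}) = α_{k,v}. -/
noncomputable section

open MeasureTheory Real Filter Topology Metric Set Bornology

/-- The selected fixed point `α_{k,v}`: the infimum of the positive fixed points of
`α ↦ I_k(v,α)` if `I_k(v,0) > 0`, the supremum of the negative fixed points if
`I_k(v,0) < 0`, and `0` otherwise. -/
def alphaF (m : ℕ) (u₀ F : Euc m → ℝ) (v : Euc m → ℝ) : ℝ :=
  if 0 < Ifun m u₀ F v 0 then sInf {a : ℝ | 0 < a ∧ Ifun m u₀ F v a = a}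
  else if Ifun m u₀ F v 0 < 0 then sSup {a : ℝ | a < 0 ∧ Ifun m u₀ F v a = a}
  else 0

lemma exp_mvt (a b : ℝ) :
    |Real.exp a - Real.exp b| ≤ |a - b| * max (Real.exp a) (Real.exp b) := by
  wlog h : b ≤ a with H
  · rw [abs_sub_comm, abs_sub_comm a b, max_comm]
    exact H b a (le_of_not_ge h)
  have h1 : Real.exp (b - a) * Real.exp a = Real.exp b := by
    rw [← Real.exp_add]; ring_nf
  have h2 := Real.add_one_le_exp (b - a)
  rw [abs_of_nonneg (sub_nonneg.2 (Real.exp_le_exp.2 h)), abs_of_nonneg (sub_nonneg.2 h),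
      max_eq_left (Real.exp_le_exp.2 h)]
  nlinarith [Real.exp_pos a]

lemma gamma2m_pos (m : ℕ) : 0 < gamma2m m := by
  have h1 : (0:ℝ) < (((2*m:ℕ) : ℝ) + 1)/2 := by positivity
  have hG := Real.Gamma_pos_of_pos h1
  have hpi := Real.rpow_pos_of_pos Real.pi_pos ((((2*m:ℕ):ℝ)+1)/2)
  have hf : (0:ℝ) < (Nat.factorial (2*m-1) : ℝ) := by positivity
  unfold gamma2m Lambda1 sphereVol
  positivity

set_option maxHeartbeats 2000000 in
/-- **Lemma (stability of fixed points and continuity of `v ↦ α_{k,v}`).**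
There are `ε₀ > 0` and `ε₁ ∈ (0, q/(8m))` such that for every `F_k` satisfying the
smallness assumption: (i) fixed points `α_v` of `α ↦ I_k(v,α)` with `|α_v| < q/(4m)`
persist within distance `ε` under perturbations of `v` of size `ε²` for every
`ε ∈ (0,ε₀)`; (ii) `α_{k,v}` is a fixed point and `v ↦ α_{k,v}` is continuous on the
closed unit ball of `C₀(ℝ^{2m})`. -/
theorem statement12 (m : ℕ) (hm : 1 ≤ m) (q : ℝ) (hq : 0 < q) (k : ℕ)
    (u₀ : Euc m → ℝ) (hu₀smooth : ContDiff ℝ (⊤ : ℕ∞) u₀) (hu₀pos : ∀ x, 0 < u₀ x)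
    (hu₀log : ∀ x : Euc m, 2 ≤ ‖x‖ → u₀ x = Real.log ‖x‖)
    (M : ℝ) (hM : 0 < M)
    (hMbd : ∀ x ∈ closedBall (0 : Euc m) 2, Real.exp (u₀ x) ≤ M) :
    ∃ ε₀ : ℝ, 0 < ε₀ ∧ ∃ ε₁ ∈ Set.Ioo (0 : ℝ) (q / (8*m)),
      ∀ F : Euc m → ℝ, Measurable F →
        Integrable (fun x => |F x| * (M + ‖x‖) ^ q) →
        (∫ x, |F x| * (M + ‖x‖) ^ q) ≤ ε₁ * Real.exp (-(k : ℝ)) * Real.exp (-(2*m : ℝ)) →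
        -- (i) persistence of fixed points
        ((∀ v : Euc m → ℝ, Continuous v → Tendsto v (cocompact (Euc m)) (𝓝 0) →
            (∀ x, |v x| ≤ 1) →
          ∀ αv : ℝ, |αv| < q / (4*m) → Ifun m u₀ F v αv = αv →
          ∀ ε ∈ Set.Ioo (0 : ℝ) ε₀,
          ∀ w : Euc m → ℝ, Continuous w → Tendsto w (cocompact (Euc m)) (𝓝 0) →
            (∀ x, |w x| ≤ 1) → (∀ x, |w x - v x| ≤ ε^2) →
            ∃ αw ∈ Set.Ioo (αv - ε) (αv + ε), Ifun m u₀ F w αw = αw) ∧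
        -- (ii) α_{k,v} is a fixed point ...
        (∀ v : Euc m → ℝ, Continuous v → Tendsto v (cocompact (Euc m)) (𝓝 0) →
            (∀ x, |v x| ≤ 1) →
          Ifun m u₀ F v (alphaF m u₀ F v) = alphaF m u₀ F v) ∧
        -- ... and v ↦ α_{k,v} is continuous on the closed unit ball of C₀
        (∀ v : Euc m → ℝ, Continuous v → Tendsto v (cocompact (Euc m)) (𝓝 0) →
            (∀ x, |v x| ≤ 1) →
          ∀ η : ℝ, 0 < η → ∃ ζ : ℝ, 0 < ζ ∧
            ∀ w : Euc m → ℝ, Continuous w → Tendsto w (cocompact (Euc m)) (𝓝 0) →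
              (∀ x, |w x| ≤ 1) → (∀ x, |w x - v x| ≤ ζ) →
              |alphaF m u₀ F w - alphaF m u₀ F v| ≤ η)) := by
  have hγ : 0 < gamma2m m := gamma2m_pos m
  have hmR : (1:ℝ) ≤ (m:ℝ) := by exact_mod_cast hm
  have hmpos : (0:ℝ) < (m:ℝ) := lt_of_lt_of_le one_pos hmR
  have hu₀c : Continuous u₀ := hu₀smooth.continuous
  have hr : (0:ℝ) < q/(4*(m:ℝ)) := by positivity
  set ε₁ : ℝ := min (q/(16*(m:ℝ)))
    (min (gamma2m m*q/(16*(m:ℝ))) (gamma2m m/(8*(m:ℝ)))) with hε₁def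
  have hε₁pos : 0 < ε₁ := lt_min (by positivity)
    (lt_min (div_pos (mul_pos hγ hq) (by positivity)) (div_pos hγ (by positivity)))
  have hε₁a : ε₁ * (16*(m:ℝ)) ≤ q := (le_div_iff₀ (by positivity)).1 (min_le_left _ _)
  have hε₁b : ε₁ * (16*(m:ℝ)) ≤ gamma2m m * q :=
    (le_div_iff₀ (by positivity)).1 ((min_le_right _ _).trans (min_le_left _ _))
  have hε₁c : ε₁ * (8*(m:ℝ)) ≤ gamma2m m :=
    (le_div_iff₀ (by positivity)).1 ((min_le_right _ _).trans (min_le_right _ _))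
  have hB : ε₁/gamma2m m < q/(4*(m:ℝ)) := by
    rw [div_lt_div_iff₀ hγ (by positivity)]
    nlinarith [mul_pos hε₁pos hmpos, mul_pos hγ hq]
  have hBnn : 0 ≤ ε₁/gamma2m m := (div_pos hε₁pos hγ).le
  have hLnn : 0 ≤ 4*(m:ℝ)*ε₁/(q*gamma2m m) :=
    div_nonneg (by nlinarith) (by nlinarith)
  have hLle : 4*(m:ℝ)*ε₁/(q*gamma2m m) ≤ 1/4 := by
    rw [div_le_iff₀ (by nlinarith : (0:ℝ) < q*gamma2m m)]
    nlinarith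
  have hCnn : 0 ≤ 2*(m:ℝ)*ε₁/gamma2m m := div_nonneg (by nlinarith) hγ.le
  have hCle : 2*(m:ℝ)*ε₁/gamma2m m ≤ 1/4 := by
    rw [div_le_iff₀ hγ]; nlinarith
  refine ⟨1, one_pos, ε₁, ⟨hε₁pos, ?_⟩, ?_⟩
  · rw [lt_div_iff₀ (by positivity)]
    nlinarith [mul_pos hε₁pos hmpos]
  intro F hFmeas hgInt hgsmall
  -- basic facts about M and u₀
  have hM1 : 1 < M := by
    have h0 : (0 : Euc m) ∈ closedBall (0 : Euc m) 2 :=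
      mem_closedBall_self (by norm_num)
    have h2 : (1:ℝ) < Real.exp (u₀ 0) := by
      rw [← Real.exp_zero]; exact Real.exp_lt_exp.2 (hu₀pos 0)
    linarith [hMbd 0 h0]
  have hMx : ∀ x : Euc m, 1 ≤ M + ‖x‖ := fun x => by linarith [norm_nonneg x]
  have hMxpos : ∀ x : Euc m, (0:ℝ) < M + ‖x‖ := fun x => lt_of_lt_of_le one_pos (hMx x)
  have hexpu : ∀ x : Euc m, Real.exp (u₀ x) ≤ M + ‖x‖ := by
    intro x
    by_cases h : ‖x‖ ≤ 2
    · have := hMbd x (mem_closedBall_zero_iff.2 h)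
      linarith [norm_nonneg x]
    · have hx2 : 2 ≤ ‖x‖ := le_of_not_ge h
      rw [hu₀log x hx2, Real.exp_log (by linarith : (0:ℝ) < ‖x‖)]
      linarith
  have hP1 : ∀ x : Euc m, (1:ℝ) ≤ (M + ‖x‖) ^ (q/2) :=
    fun x => Real.one_le_rpow (hMx x) (by positivity)
  have hPnn : ∀ x : Euc m, (0:ℝ) ≤ (M + ‖x‖) ^ (q/2) :=
    fun x => le_trans zero_le_one (hP1 x)
  have hPq : ∀ x : Euc m, (M + ‖x‖) ^ (q/2) ≤ (M + ‖x‖) ^ q := fun x =>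
    Real.rpow_le_rpow_of_exponent_le (hMx x) (by linarith)
  have hQnn : ∀ x : Euc m, (0:ℝ) ≤ (M + ‖x‖) ^ q :=
    fun x => le_trans (hPnn x) (hPq x)
  have hPP : ∀ x : Euc m, (M + ‖x‖) ^ (q/2) * (M + ‖x‖) ^ (q/2) = (M + ‖x‖) ^ q := fun x => by
    rw [← Real.rpow_add (hMxpos x)]; ring_nf
  -- bound on the exponential weight
  have hEB : ∀ α : ℝ, (|α| ≤ q/(4*(m:ℝ)) ∨ 0 ≤ α) → ∀ x : Euc m,
      Real.exp (-(2*(m:ℝ)) * α * u₀ x) ≤ (M + ‖x‖) ^ (q/2) := by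
    intro α hα x
    rcases hα with hα | hα
    · have h2 : -(2*(m:ℝ)) * α ≤ q/2 := by
        have h3 := neg_le_abs α
        have h4 : (2*(m:ℝ)) * |α| ≤ q/2 := by
          rw [show q/2 = (2*(m:ℝ)) * (q/(4*(m:ℝ))) from by field_simp; ring]
          exact mul_le_mul_of_nonneg_left hα (by positivity)
        nlinarith [mul_le_mul_of_nonneg_left h3 (show (0:ℝ) ≤ 2*(m:ℝ) by positivity)]
      have h1 : -(2*(m:ℝ)) * α * u₀ x ≤ (q/2) * u₀ x :=
        mul_le_mul_of_nonneg_right h2 (hu₀pos x).le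
      calc Real.exp (-(2*(m:ℝ)) * α * u₀ x) ≤ Real.exp ((q/2) * u₀ x) := Real.exp_le_exp.2 h1
        _ = (Real.exp (u₀ x)) ^ (q/2) := by
            rw [Real.rpow_def_of_pos (Real.exp_pos _), Real.log_exp]; ring_nf
        _ ≤ (M + ‖x‖) ^ (q/2) :=
            Real.rpow_le_rpow (Real.exp_pos _).le (hexpu x) (by positivity)
    · have h1 : -(2*(m:ℝ)) * α * u₀ x ≤ 0 := by
        nlinarith [mul_nonneg (mul_nonneg (show (0:ℝ) ≤ 2*(m:ℝ) by positivity) hα) (hu₀pos x).le]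
      calc Real.exp (-(2*(m:ℝ)) * α * u₀ x) ≤ Real.exp 0 := Real.exp_le_exp.2 h1
        _ = 1 := Real.exp_zero
        _ ≤ (M + ‖x‖) ^ (q/2) := hP1 x
  -- bound on u₀
  have hu₀b : ∀ x : Euc m, u₀ x ≤ (2/q) * (M + ‖x‖) ^ (q/2) := by
    intro x
    have hs : Real.log ((Real.exp (u₀ x)) ^ (q/2)) = (q/2) * Real.log (Real.exp (u₀ x)) :=
      Real.log_rpow (Real.exp_pos _) _
    rw [Real.log_exp] at hs
    have h2 : Real.log ((Real.exp (u₀ x)) ^ (q/2)) ≤ (Real.exp (u₀ x)) ^ (q/2) - 1 :=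
      Real.log_le_sub_one_of_pos (by positivity)
    have h3 : (Real.exp (u₀ x)) ^ (q/2) ≤ (M + ‖x‖) ^ (q/2) :=
      Real.rpow_le_rpow (Real.exp_pos _).le (hexpu x) (by positivity)
    rw [hs] at h2
    have h4 : q/2 * u₀ x ≤ (M + ‖x‖) ^ (q/2) := by linarith
    calc u₀ x = (2/q) * (q/2 * u₀ x) := by field_simp
      _ ≤ (2/q) * (M + ‖x‖) ^ (q/2) := mul_le_mul_of_nonneg_left h4 (by positivity)
  -- measurability
  have hmeasI : ∀ (α : ℝ) (v : Euc m → ℝ), Continuous v →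
      AEStronglyMeasurable (fun x : Euc m =>
        F x * Real.exp (-(2*(m:ℝ)) * α * u₀ x) * Real.exp ((2*(m:ℝ)) * v x)) volume := by
    intro α v hv
    exact (((hFmeas.mul ((hu₀c.measurable.const_mul (-(2*(m:ℝ)) * α)).exp)).mul
      ((hv.measurable.const_mul (2*(m:ℝ))).exp)).aestronglyMeasurable)
  have hVle : ∀ v : Euc m → ℝ, (∀ x, |v x| ≤ 1) → ∀ x : Euc m,
      Real.exp ((2*(m:ℝ)) * v x) ≤ Real.exp (2*(m:ℝ)) := by
    intro v hvb x
    apply Real.exp_le_exp.2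
    nlinarith [(abs_le.1 (hvb x)).2, hmpos]
  -- pointwise bound
  have hptw : ∀ α : ℝ, (|α| ≤ q/(4*(m:ℝ)) ∨ 0 ≤ α) → ∀ v : Euc m → ℝ, (∀ x, |v x| ≤ 1) →
      ∀ x : Euc m, ‖F x * Real.exp (-(2*(m:ℝ)) * α * u₀ x) * Real.exp ((2*(m:ℝ)) * v x)‖
        ≤ Real.exp (2*(m:ℝ)) * (|F x| * (M + ‖x‖) ^ q) := by
    intro α hα v hvb x
    have e1 := (hEB α hα x).trans (hPq x)
    have e2 := hVle v hvb x
    rw [Real.norm_eq_abs, abs_mul, abs_mul, abs_of_pos (Real.exp_pos _),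
      abs_of_pos (Real.exp_pos _)]
    calc |F x| * Real.exp (-(2*(m:ℝ)) * α * u₀ x) * Real.exp ((2*(m:ℝ)) * v x)
        ≤ |F x| * (M + ‖x‖) ^ q * Real.exp (2*(m:ℝ)) := by
          apply mul_le_mul (mul_le_mul_of_nonneg_left e1 (abs_nonneg _)) e2
            (Real.exp_pos _).le (mul_nonneg (abs_nonneg _) (hQnn x))
      _ = Real.exp (2*(m:ℝ)) * (|F x| * (M + ‖x‖) ^ q) := by ring
  -- integrability
  have hInt : ∀ α : ℝ, (|α| ≤ q/(4*(m:ℝ)) ∨ 0 ≤ α) → ∀ v : Euc m → ℝ, Continuous v →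
      (∀ x, |v x| ≤ 1) →
      Integrable (fun x : Euc m =>
        F x * Real.exp (-(2*(m:ℝ)) * α * u₀ x) * Real.exp ((2*(m:ℝ)) * v x)) :=
    fun α hα v hv hvb =>
      (hgInt.const_mul (Real.exp (2*(m:ℝ)))).mono' (hmeasI α v hv)
        (ae_of_all _ (hptw α hα v hvb))
  have hexc : Real.exp (2*(m:ℝ)) * Real.exp (-(2*(m:ℝ))) = 1 := by
    rw [← Real.exp_add]; simp
  have hek : Real.exp (-(k:ℝ)) ≤ 1 :=
    Real.exp_le_one_iff.2 (neg_nonpos.2 (Nat.cast_nonneg k))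
  -- bound on |Ifun|
  have hNbd : ∀ α : ℝ, (|α| ≤ q/(4*(m:ℝ)) ∨ 0 ≤ α) → ∀ v : Euc m → ℝ, Continuous v →
      (∀ x, |v x| ≤ 1) →
      ‖∫ x, F x * Real.exp (-(2*(m:ℝ)) * α * u₀ x) * Real.exp ((2*(m:ℝ)) * v x)‖
        ≤ ε₁ * Real.exp (-(k:ℝ)) := by
    intro α hα v hv hvb
    have h1 := norm_integral_le_of_norm_le (hgInt.const_mul (Real.exp (2*(m:ℝ))))
      (ae_of_all _ (hptw α hα v hvb))
    rw [integral_const_mul] at h1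
    calc ‖∫ x, F x * Real.exp (-(2*(m:ℝ)) * α * u₀ x) * Real.exp ((2*(m:ℝ)) * v x)‖
        ≤ Real.exp (2*(m:ℝ)) * ∫ x, |F x| * (M + ‖x‖) ^ q := h1
      _ ≤ Real.exp (2*(m:ℝ)) * (ε₁ * Real.exp (-(k:ℝ)) * Real.exp (-(2*(m:ℝ)))) :=
          mul_le_mul_of_nonneg_left hgsmall (Real.exp_pos _).le
      _ = (ε₁ * Real.exp (-(k:ℝ))) * (Real.exp (2*(m:ℝ)) * Real.exp (-(2*(m:ℝ)))) := by ring
      _ = ε₁ * Real.exp (-(k:ℝ)) := by rw [hexc, mul_one]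
  have hIbound : ∀ α : ℝ, (|α| ≤ q/(4*(m:ℝ)) ∨ 0 ≤ α) → ∀ v : Euc m → ℝ, Continuous v →
      (∀ x, |v x| ≤ 1) → |Ifun m u₀ F v α| ≤ ε₁ / gamma2m m := by
    intro α hα v hv hvb
    have h1 := hNbd α hα v hv hvb
    rw [Real.norm_eq_abs] at h1
    have h2 : |Ifun m u₀ F v α| = (1/gamma2m m) *
        |∫ x, F x * Real.exp (-(2*(m:ℝ)) * α * u₀ x) * Real.exp ((2*(m:ℝ)) * v x)| := by
      simp only [Ifun]
      rw [abs_mul, abs_of_pos (one_div_pos.2 hγ)]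
    rw [h2]
    calc (1/gamma2m m) *
        |∫ x, F x * Real.exp (-(2*(m:ℝ)) * α * u₀ x) * Real.exp ((2*(m:ℝ)) * v x)|
        ≤ (1/gamma2m m) * (ε₁ * Real.exp (-(k:ℝ))) :=
          mul_le_mul_of_nonneg_left h1 (one_div_pos.2 hγ).le
      _ ≤ (1/gamma2m m) * ε₁ := mul_le_mul_of_nonneg_left
          (mul_le_of_le_one_right hε₁pos.le hek) (one_div_pos.2 hγ).le
      _ = ε₁ / gamma2m m := one_div_mul_eq_div _ _
  -- Lipschitz in α
  have hLipA : ∀ α β : ℝ, |α| ≤ q/(4*(m:ℝ)) → |β| ≤ q/(4*(m:ℝ)) → ∀ v : Euc m → ℝ,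
      Continuous v → (∀ x, |v x| ≤ 1) →
      |Ifun m u₀ F v α - Ifun m u₀ F v β| ≤ (4*(m:ℝ)*ε₁/(q*gamma2m m)) * |α - β| := by
    intro α β hα hβ v hv hvb
    have hKnn : (0:ℝ) ≤ (4*(m:ℝ)/q) * |α - β| * Real.exp (2*(m:ℝ)) := by positivity
    have hptw2 : ∀ x : Euc m,
        ‖(F x * Real.exp (-(2*(m:ℝ)) * α * u₀ x) * Real.exp ((2*(m:ℝ)) * v x))
          - (F x * Real.exp (-(2*(m:ℝ)) * β * u₀ x) * Real.exp ((2*(m:ℝ)) * v x))‖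
          ≤ ((4*(m:ℝ)/q) * |α - β| * Real.exp (2*(m:ℝ))) * (|F x| * (M + ‖x‖) ^ q) := by
      intro x
      have hmax : max (Real.exp (-(2*(m:ℝ)) * α * u₀ x)) (Real.exp (-(2*(m:ℝ)) * β * u₀ x))
          ≤ (M + ‖x‖) ^ (q/2) := max_le (hEB α (Or.inl hα) x) (hEB β (Or.inl hβ) x)
      have habs : |(-(2*(m:ℝ)) * α * u₀ x) - (-(2*(m:ℝ)) * β * u₀ x)|
          = (2*(m:ℝ)) * u₀ x * |α - β| := by
        rw [show (-(2*(m:ℝ)) * α * u₀ x) - (-(2*(m:ℝ)) * β * u₀ x)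
            = ((2*(m:ℝ)) * u₀ x) * (β - α) from by ring, abs_mul,
          abs_of_pos (mul_pos (by positivity) (hu₀pos x)), abs_sub_comm]
      have hmvt := exp_mvt (-(2*(m:ℝ)) * α * u₀ x) (-(2*(m:ℝ)) * β * u₀ x)
      rw [habs] at hmvt
      have hdiff : |Real.exp (-(2*(m:ℝ)) * α * u₀ x) - Real.exp (-(2*(m:ℝ)) * β * u₀ x)|
          ≤ (4*(m:ℝ)/q) * |α - β| * (M + ‖x‖) ^ q := by
        have s1 : (2*(m:ℝ)) * u₀ x * |α - β| *
            max (Real.exp (-(2*(m:ℝ)) * α * u₀ x)) (Real.exp (-(2*(m:ℝ)) * β * u₀ x))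
            ≤ (2*(m:ℝ)) * u₀ x * |α - β| * (M + ‖x‖) ^ (q/2) :=
          mul_le_mul_of_nonneg_left hmax
            (mul_nonneg (mul_nonneg (by positivity) (hu₀pos x).le) (abs_nonneg _))
        have s2 : (2*(m:ℝ)) * u₀ x * |α - β| * (M + ‖x‖) ^ (q/2)
            ≤ (2*(m:ℝ)) * ((2/q) * (M + ‖x‖) ^ (q/2)) * |α - β| * (M + ‖x‖) ^ (q/2) := by
          apply mul_le_mul_of_nonneg_right _ (hPnn x)
          apply mul_le_mul_of_nonneg_right _ (abs_nonneg _)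
          exact mul_le_mul_of_nonneg_left (hu₀b x) (by positivity)
        have s3 : (2*(m:ℝ)) * ((2/q) * (M + ‖x‖) ^ (q/2)) * |α - β| * (M + ‖x‖) ^ (q/2)
            = (4*(m:ℝ)/q) * |α - β| * ((M + ‖x‖) ^ (q/2) * (M + ‖x‖) ^ (q/2)) := by ring
        rw [s3, hPP x] at s2
        exact hmvt.trans (s1.trans s2)
      rw [show (F x * Real.exp (-(2*(m:ℝ)) * α * u₀ x) * Real.exp ((2*(m:ℝ)) * v x))
          - (F x * Real.exp (-(2*(m:ℝ)) * β * u₀ x) * Real.exp ((2*(m:ℝ)) * v x))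
          = F x * (Real.exp (-(2*(m:ℝ)) * α * u₀ x) - Real.exp (-(2*(m:ℝ)) * β * u₀ x))
            * Real.exp ((2*(m:ℝ)) * v x) from by ring,
        Real.norm_eq_abs, abs_mul, abs_mul, abs_of_pos (Real.exp_pos _)]
      calc |F x| * |Real.exp (-(2*(m:ℝ)) * α * u₀ x) - Real.exp (-(2*(m:ℝ)) * β * u₀ x)|
            * Real.exp ((2*(m:ℝ)) * v x)
          ≤ |F x| * ((4*(m:ℝ)/q) * |α - β| * (M + ‖x‖) ^ q) * Real.exp (2*(m:ℝ)) := by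
            apply mul_le_mul (mul_le_mul_of_nonneg_left hdiff (abs_nonneg _)) (hVle v hvb x)
              (Real.exp_pos _).le
            exact mul_nonneg (abs_nonneg _)
              (mul_nonneg (mul_nonneg (by positivity) (abs_nonneg _)) (hQnn x))
        _ = ((4*(m:ℝ)/q) * |α - β| * Real.exp (2*(m:ℝ))) * (|F x| * (M + ‖x‖) ^ q) := by ring
    have hsub : Ifun m u₀ F v α - Ifun m u₀ F v β = (1/gamma2m m) *
        ∫ x, ((F x * Real.exp (-(2*(m:ℝ)) * α * u₀ x) * Real.exp ((2*(m:ℝ)) * v x))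
          - (F x * Real.exp (-(2*(m:ℝ)) * β * u₀ x) * Real.exp ((2*(m:ℝ)) * v x))) := by
      simp only [Ifun]
      rw [integral_sub (hInt α (Or.inl hα) v hv hvb) (hInt β (Or.inl hβ) v hv hvb)]
      ring
    have h6 := norm_integral_le_of_norm_le
      (hgInt.const_mul ((4*(m:ℝ)/q) * |α - β| * Real.exp (2*(m:ℝ)))) (ae_of_all _ hptw2)
    rw [integral_const_mul] at h6
    have h7 : ‖∫ x, ((F x * Real.exp (-(2*(m:ℝ)) * α * u₀ x) * Real.exp ((2*(m:ℝ)) * v x))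
          - (F x * Real.exp (-(2*(m:ℝ)) * β * u₀ x) * Real.exp ((2*(m:ℝ)) * v x)))‖
        ≤ ((4*(m:ℝ)/q) * |α - β| * Real.exp (2*(m:ℝ)))
          * (ε₁ * Real.exp (-(k:ℝ)) * Real.exp (-(2*(m:ℝ)))) :=
      h6.trans (mul_le_mul_of_nonneg_left hgsmall hKnn)
    rw [hsub, abs_mul, abs_of_pos (one_div_pos.2 hγ), ← Real.norm_eq_abs]
    calc (1/gamma2m m) *
        ‖∫ x, ((F x * Real.exp (-(2*(m:ℝ)) * α * u₀ x) * Real.exp ((2*(m:ℝ)) * v x))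
          - (F x * Real.exp (-(2*(m:ℝ)) * β * u₀ x) * Real.exp ((2*(m:ℝ)) * v x)))‖
        ≤ (1/gamma2m m) * (((4*(m:ℝ)/q) * |α - β| * Real.exp (2*(m:ℝ)))
          * (ε₁ * Real.exp (-(k:ℝ)) * Real.exp (-(2*(m:ℝ))))) :=
          mul_le_mul_of_nonneg_left h7 (one_div_pos.2 hγ).le
      _ = (4*(m:ℝ)*ε₁/(q*gamma2m m)) * |α - β|
          * (Real.exp (-(k:ℝ)) * (Real.exp (2*(m:ℝ)) * Real.exp (-(2*(m:ℝ))))) := by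
          field_simp
      _ = (4*(m:ℝ)*ε₁/(q*gamma2m m)) * |α - β| * Real.exp (-(k:ℝ)) := by
          rw [hexc, mul_one]
      _ ≤ (4*(m:ℝ)*ε₁/(q*gamma2m m)) * |α - β| :=
          mul_le_of_le_one_right (mul_nonneg hLnn (abs_nonneg _)) hek
  -- Lipschitz in v
  have hLipV : ∀ α : ℝ, |α| ≤ q/(4*(m:ℝ)) → ∀ v w : Euc m → ℝ, Continuous v →
      (∀ x, |v x| ≤ 1) → Continuous w → (∀ x, |w x| ≤ 1) → ∀ ζ : ℝ, 0 ≤ ζ →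
      (∀ x, |w x - v x| ≤ ζ) →
      |Ifun m u₀ F w α - Ifun m u₀ F v α| ≤ (2*(m:ℝ)*ε₁/gamma2m m) * ζ := by
    intro α hα v w hv hvb hw hwb ζ hζ hwv
    have hKnn : (0:ℝ) ≤ (2*(m:ℝ)) * ζ * Real.exp (2*(m:ℝ)) := by positivity
    have hptw2 : ∀ x : Euc m,
        ‖(F x * Real.exp (-(2*(m:ℝ)) * α * u₀ x) * Real.exp ((2*(m:ℝ)) * w x))
          - (F x * Real.exp (-(2*(m:ℝ)) * α * u₀ x) * Real.exp ((2*(m:ℝ)) * v x))‖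
          ≤ ((2*(m:ℝ)) * ζ * Real.exp (2*(m:ℝ))) * (|F x| * (M + ‖x‖) ^ q) := by
      intro x
      have hmvt := exp_mvt ((2*(m:ℝ)) * w x) ((2*(m:ℝ)) * v x)
      have habs : |(2*(m:ℝ)) * w x - (2*(m:ℝ)) * v x| ≤ (2*(m:ℝ)) * ζ := by
        rw [show (2*(m:ℝ)) * w x - (2*(m:ℝ)) * v x = (2*(m:ℝ)) * (w x - v x) from by ring,
          abs_mul, abs_of_pos (by positivity : (0:ℝ) < 2*(m:ℝ))]
        exact mul_le_mul_of_nonneg_left (hwv x) (by positivity)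
      have hmaxle : max (Real.exp ((2*(m:ℝ)) * w x)) (Real.exp ((2*(m:ℝ)) * v x))
          ≤ Real.exp (2*(m:ℝ)) := max_le (hVle w hwb x) (hVle v hvb x)
      have hmaxnn : (0:ℝ) ≤ max (Real.exp ((2*(m:ℝ)) * w x)) (Real.exp ((2*(m:ℝ)) * v x)) :=
        le_trans (Real.exp_pos _).le (le_max_left _ _)
      have hdiff : |Real.exp ((2*(m:ℝ)) * w x) - Real.exp ((2*(m:ℝ)) * v x)|
          ≤ (2*(m:ℝ)) * ζ * Real.exp (2*(m:ℝ)) :=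
        hmvt.trans (mul_le_mul habs hmaxle hmaxnn (by positivity))
      have hE : Real.exp (-(2*(m:ℝ)) * α * u₀ x) ≤ (M + ‖x‖) ^ q :=
        (hEB α (Or.inl hα) x).trans (hPq x)
      rw [show (F x * Real.exp (-(2*(m:ℝ)) * α * u₀ x) * Real.exp ((2*(m:ℝ)) * w x))
          - (F x * Real.exp (-(2*(m:ℝ)) * α * u₀ x) * Real.exp ((2*(m:ℝ)) * v x))
          = F x * Real.exp (-(2*(m:ℝ)) * α * u₀ x)
            * (Real.exp ((2*(m:ℝ)) * w x) - Real.exp ((2*(m:ℝ)) * v x)) from by ring,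
        Real.norm_eq_abs, abs_mul, abs_mul, abs_of_pos (Real.exp_pos _)]
      calc |F x| * Real.exp (-(2*(m:ℝ)) * α * u₀ x)
            * |Real.exp ((2*(m:ℝ)) * w x) - Real.exp ((2*(m:ℝ)) * v x)|
          ≤ |F x| * (M + ‖x‖) ^ q * ((2*(m:ℝ)) * ζ * Real.exp (2*(m:ℝ))) := by
            apply mul_le_mul (mul_le_mul_of_nonneg_left hE (abs_nonneg _)) hdiff
              (abs_nonneg _) (mul_nonneg (abs_nonneg _) (hQnn x))
        _ = ((2*(m:ℝ)) * ζ * Real.exp (2*(m:ℝ))) * (|F x| * (M + ‖x‖) ^ q) := by ring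
    have hsub : Ifun m u₀ F w α - Ifun m u₀ F v α = (1/gamma2m m) *
        ∫ x, ((F x * Real.exp (-(2*(m:ℝ)) * α * u₀ x) * Real.exp ((2*(m:ℝ)) * w x))
          - (F x * Real.exp (-(2*(m:ℝ)) * α * u₀ x) * Real.exp ((2*(m:ℝ)) * v x))) := by
      simp only [Ifun]
      rw [integral_sub (hInt α (Or.inl hα) w hw hwb) (hInt α (Or.inl hα) v hv hvb)]
      ring
    have h6 := norm_integral_le_of_norm_le
      (hgInt.const_mul ((2*(m:ℝ)) * ζ * Real.exp (2*(m:ℝ)))) (ae_of_all _ hptw2)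
    rw [integral_const_mul] at h6
    have h7 : ‖∫ x, ((F x * Real.exp (-(2*(m:ℝ)) * α * u₀ x) * Real.exp ((2*(m:ℝ)) * w x))
          - (F x * Real.exp (-(2*(m:ℝ)) * α * u₀ x) * Real.exp ((2*(m:ℝ)) * v x)))‖
        ≤ ((2*(m:ℝ)) * ζ * Real.exp (2*(m:ℝ)))
          * (ε₁ * Real.exp (-(k:ℝ)) * Real.exp (-(2*(m:ℝ)))) :=
      h6.trans (mul_le_mul_of_nonneg_left hgsmall hKnn)
    rw [hsub, abs_mul, abs_of_pos (one_div_pos.2 hγ), ← Real.norm_eq_abs]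
    calc (1/gamma2m m) *
        ‖∫ x, ((F x * Real.exp (-(2*(m:ℝ)) * α * u₀ x) * Real.exp ((2*(m:ℝ)) * w x))
          - (F x * Real.exp (-(2*(m:ℝ)) * α * u₀ x) * Real.exp ((2*(m:ℝ)) * v x)))‖
        ≤ (1/gamma2m m) * (((2*(m:ℝ)) * ζ * Real.exp (2*(m:ℝ)))
          * (ε₁ * Real.exp (-(k:ℝ)) * Real.exp (-(2*(m:ℝ))))) :=
          mul_le_mul_of_nonneg_left h7 (one_div_pos.2 hγ).le
      _ = (2*(m:ℝ)*ε₁/gamma2m m) * ζ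
          * (Real.exp (-(k:ℝ)) * (Real.exp (2*(m:ℝ)) * Real.exp (-(2*(m:ℝ))))) := by
          field_simp
      _ = (2*(m:ℝ)*ε₁/gamma2m m) * ζ * Real.exp (-(k:ℝ)) := by rw [hexc, mul_one]
      _ ≤ (2*(m:ℝ)*ε₁/gamma2m m) * ζ :=
          mul_le_of_le_one_right (mul_nonneg hCnn hζ) hek
  -- existence of a fixed point in [-r, r]
  have hfix : ∀ v : Euc m → ℝ, Continuous v → (∀ x, |v x| ≤ 1) →
      ∃ a : ℝ, |a| ≤ ε₁/gamma2m m ∧ Ifun m u₀ F v a = a := by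
    intro v hv hvb
    have hcont : ContinuousOn (fun a : ℝ => Ifun m u₀ F v a)
        (Icc (-(q/(4*(m:ℝ)))) (q/(4*(m:ℝ)))) := by
      have hlip : LipschitzOnWith (Real.toNNReal (4*(m:ℝ)*ε₁/(q*gamma2m m)))
          (fun a : ℝ => Ifun m u₀ F v a) (Icc (-(q/(4*(m:ℝ)))) (q/(4*(m:ℝ)))) := by
        rw [lipschitzOnWith_iff_dist_le_mul]
        intro a ha b hb
        rw [Real.dist_eq, Real.dist_eq, Real.coe_toNNReal _ hLnn]
        exact hLipA a b (abs_le.2 ⟨ha.1, ha.2⟩) (abs_le.2 ⟨hb.1, hb.2⟩) v hv hvb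
      exact hlip.continuousOn
    have hcontf : ContinuousOn (fun a : ℝ => Ifun m u₀ F v a - a)
        (Icc (-(q/(4*(m:ℝ)))) (q/(4*(m:ℝ)))) := hcont.sub continuousOn_id
    have h1 : Ifun m u₀ F v (q/(4*(m:ℝ))) - (q/(4*(m:ℝ))) ≤ 0 := by
      have := hIbound (q/(4*(m:ℝ))) (Or.inr hr.le) v hv hvb
      have h2 := (abs_le.1 this).2
      linarith [hB]
    have h2 : 0 ≤ Ifun m u₀ F v (-(q/(4*(m:ℝ)))) - (-(q/(4*(m:ℝ)))) := by
      have h3 : |(-(q/(4*(m:ℝ))))| ≤ q/(4*(m:ℝ)) := by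
        rw [abs_neg, abs_of_pos hr]
      have := hIbound (-(q/(4*(m:ℝ)))) (Or.inl h3) v hv hvb
      have h4 := (abs_le.1 this).1
      linarith [hB]
    obtain ⟨a, ha, hfa⟩ := intermediate_value_Icc'
      (by linarith : -(q/(4*(m:ℝ))) ≤ q/(4*(m:ℝ))) hcontf (Set.mem_Icc.2 ⟨h1, h2⟩)
    have hfix : Ifun m u₀ F v a = a := by
      have : Ifun m u₀ F v a - a = 0 := hfa
      linarith
    have haB : |a| ≤ ε₁/gamma2m m := by
      rw [← hfix]
      exact hIbound a (Or.inl (abs_le.2 ⟨ha.1, ha.2⟩)) v hv hvb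
    exact ⟨a, haB, hfix⟩
  -- uniqueness of fixed points in [-r, r]
  have huniq : ∀ v : Euc m → ℝ, Continuous v → (∀ x, |v x| ≤ 1) →
      ∀ a b : ℝ, |a| ≤ q/(4*(m:ℝ)) → |b| ≤ q/(4*(m:ℝ)) →
      Ifun m u₀ F v a = a → Ifun m u₀ F v b = b → a = b := by
    intro v hv hvb a b ha hb hfa hfb
    have h1 := hLipA a b ha hb v hv hvb
    rw [hfa, hfb] at h1
    have h2 := abs_nonneg (a - b)
    have h3 : |a - b| = 0 := by nlinarith
    have := abs_eq_zero.1 h3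
    linarith
  -- identification of alphaF with the unique fixed point
  have halpha : ∀ v : Euc m → ℝ, Continuous v → (∀ x, |v x| ≤ 1) →
      ∃ a : ℝ, |a| ≤ ε₁/gamma2m m ∧ Ifun m u₀ F v a = a ∧ alphaF m u₀ F v = a := by
    intro v hv hvb
    obtain ⟨a, haB, hfa⟩ := hfix v hv hvb
    have har : |a| ≤ q/(4*(m:ℝ)) := haB.trans hB.le
    have h0r : |(0:ℝ)| ≤ q/(4*(m:ℝ)) := by rw [abs_zero]; exact hr.le
    refine ⟨a, haB, hfa, ?_⟩
    rw [alphaF]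
    split_ifs with h1 h2
    · -- 0 < Ifun v 0 : positive fixed point, a is the least (indeed the only) one
      have ha0 : 0 < a := by
        by_contra hcon
        push_neg at hcon
        have hd := hLipA 0 a h0r har v hv hvb
        rw [hfa] at hd
        have h0a : |(0:ℝ) - a| = -a := by
          rw [zero_sub, abs_neg, abs_of_nonpos hcon]
        rw [h0a] at hd
        have h5 := (abs_le.1 hd).2
        have h6 : (4*(m:ℝ)*ε₁/(q*gamma2m m)) * (-a) ≤ (1/4) * (-a) :=
          mul_le_mul_of_nonneg_right hLle (neg_nonneg.2 hcon)
        linarith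
      have hleast : IsLeast {b : ℝ | 0 < b ∧ Ifun m u₀ F v b = b} a := by
        constructor
        · exact ⟨ha0, hfa⟩
        · rintro b ⟨hb0, hfb⟩
          have hbB : |b| ≤ ε₁/gamma2m m := by
            rw [← hfb]; exact hIbound b (Or.inr hb0.le) v hv hvb
          have : b = a := huniq v hv hvb b a (hbB.trans hB.le) har hfb hfa
          exact this.ge
      exact hleast.csInf_eq
    · -- Ifun v 0 < 0 : negative fixed point, a is the greatest one
      have ha0 : a < 0 := by
        by_contra hcon
        push_neg at hcon
        have hd := hLipA 0 a h0r har v hv hvb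
        rw [hfa] at hd
        have h0a : |(0:ℝ) - a| = a := by
          rw [zero_sub, abs_neg, abs_of_nonneg hcon]
        rw [h0a] at hd
        have h5 := (abs_le.1 hd).1
        have h6 : (4*(m:ℝ)*ε₁/(q*gamma2m m)) * a ≤ (1/4) * a :=
          mul_le_mul_of_nonneg_right hLle hcon
        linarith
      have hgreat : IsGreatest {b : ℝ | b < 0 ∧ Ifun m u₀ F v b = b} a := by
        constructor
        · exact ⟨ha0, hfa⟩
        · rintro b ⟨hb0, hfb⟩
          by_cases hbr : -(q/(4*(m:ℝ))) ≤ b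
          · have hbb : |b| ≤ q/(4*(m:ℝ)) := abs_le.2 ⟨hbr, by linarith⟩
            exact (huniq v hv hvb b a hbb har hfb hfa).le
          · push_neg at hbr
            have h8 := (abs_le.1 haB).1
            linarith [hB]
      exact hgreat.csSup_eq
    · -- Ifun v 0 = 0
      have h0 : Ifun m u₀ F v 0 = 0 := le_antisymm (le_of_not_gt h1) (le_of_not_gt h2)
      exact (huniq v hv hvb 0 a h0r har h0 hfa)
  -- conclusion
  refine ⟨?_, ?_, ?_⟩
  · -- (i) persistence of fixed points
    intro v hv hvt hvb αv hαv hfαv ε hε w hw hwt hwb hwv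
    obtain ⟨b, hbB, hfb⟩ := hfix w hw hwb
    have hαvr : |αv| ≤ q/(4*(m:ℝ)) := hαv.le
    have hbr : |b| ≤ q/(4*(m:ℝ)) := hbB.trans hB.le
    have hd1 := hLipA b αv hbr hαvr w hw hwb
    have hd2 := hLipV αv hαvr v w hv hvb hw hwb (ε^2) (by positivity) hwv
    rw [hfb] at hd1
    have htri : |b - αv| ≤ |b - Ifun m u₀ F w αv| + |Ifun m u₀ F w αv - αv| := by
      have := abs_sub_le b (Ifun m u₀ F w αv) αv
      linarith
    have hd2' : |Ifun m u₀ F w αv - αv| ≤ (2*(m:ℝ)*ε₁/gamma2m m) * ε^2 := by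
      calc |Ifun m u₀ F w αv - αv| = |Ifun m u₀ F w αv - Ifun m u₀ F v αv| := by rw [hfαv]
        _ ≤ (2*(m:ℝ)*ε₁/gamma2m m) * ε^2 := hd2
    have hbound : |b - αv| ≤ (4*(m:ℝ)*ε₁/(q*gamma2m m)) * |b - αv|
        + (2*(m:ℝ)*ε₁/gamma2m m) * ε^2 := by linarith [hd1]
    have hLb := abs_nonneg (b - αv)
    have hfin : |b - αv| < ε := by
      have h9 : (4*(m:ℝ)*ε₁/(q*gamma2m m)) * |b - αv| ≤ (1/4) * |b - αv| :=
        mul_le_mul_of_nonneg_right hLle hLb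
      have h10 : (2*(m:ℝ)*ε₁/gamma2m m) * ε^2 ≤ (1/4) * ε^2 :=
        mul_le_mul_of_nonneg_right hCle (by positivity)
      have h11 : |b - αv| ≤ (1/3) * ε^2 := by linarith
      have hε1 := hε.1
      have hε2 := hε.2
      nlinarith
    refine ⟨b, Set.mem_Ioo.2 ⟨?_, ?_⟩, hfb⟩
    · linarith [(abs_lt.1 hfin).1]
    · linarith [(abs_lt.1 hfin).2]
  · -- (ii) alphaF is a fixed point
    intro v hv hvt hvb
    obtain ⟨a, haB, hfa, heq⟩ := halpha v hv hvb
    rw [heq]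
    exact hfa
  · -- (iii) continuity of alphaF
    intro v hv hvt hvb η hη
    refine ⟨η, hη, ?_⟩
    intro w hw hwt hwb hwv
    obtain ⟨a, haB, hfa, heqa⟩ := halpha v hv hvb
    obtain ⟨b, hbB, hfb, heqb⟩ := halpha w hw hwb
    rw [heqa, heqb]
    have har : |a| ≤ q/(4*(m:ℝ)) := haB.trans hB.le
    have hbr : |b| ≤ q/(4*(m:ℝ)) := hbB.trans hB.le
    have hd1 := hLipA b a hbr har w hw hwb
    rw [hfb] at hd1
    have hd2 := hLipV a har v w hv hvb hw hwb η hη.le hwv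
    have htri : |b - a| ≤ |b - Ifun m u₀ F w a| + |Ifun m u₀ F w a - a| := by
      have := abs_sub_le b (Ifun m u₀ F w a) a
      linarith
    have hd2' : |Ifun m u₀ F w a - a| ≤ (2*(m:ℝ)*ε₁/gamma2m m) * η := by
      calc |Ifun m u₀ F w a - a| = |Ifun m u₀ F w a - Ifun m u₀ F v a| := by rw [hfa]
        _ ≤ (2*(m:ℝ)*ε₁/gamma2m m) * η := hd2
    have hLb := abs_nonneg (b - a)
    have h9 : (4*(m:ℝ)*ε₁/(q*gamma2m m)) * |b - a| ≤ (1/4) * |b - a| :=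
      mul_le_mul_of_nonneg_right hLle hLb
    have h10 : (2*(m:ℝ)*ε₁/gamma2m m) * η ≤ (1/4) * η :=
      mul_le_mul_of_nonneg_right hCle hη.le
    have h11 : |b - a| ≤ (1/3) * η := by linarith [hd1]
    calc |b - a| ≤ (1/3) * η := h11
      _ ≤ η := by linarith
end
end
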